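/- If Y₁, Y₂, Y₃ are independent standard Gaussian random variables, then E[min(|Y₁|, |Y₂|, |Y₃|)] = (12/π^{3/2})·(√2·π/4 − arctan(√2)). -/

import Mathlib

/-!
Write `Q t = ∫_t^∞ e^{-y²/2} dy`. By the layer-cake formula and independence,
`E[min |Yᵢ|] = ∫₀^∞ P(|Y| > t)³ dt = (2/√(2π))³ ∫₀^∞ Q(t)³ dt`.
Since `Q' = -e^{-t²/2}`, the function `t Q³ - 3 e^{-t²/2} Q²` has derivative
`Q³ + 6 e^{-t²} Q` and value `-3 Q(0)² = -3π/2` at `0`, so `∫₀^∞ Q³ = 3π/2 - 6 ∫₀^∞ e^{-t²} Q`.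
The substitution `y = t s` gives `e^{-t²} Q(t) = ∫₁^∞ t e^{-(1 + s²/2) t²} ds`, and exchanging
the two integrals leaves `∫₁^∞ ds / (2 + s²) = arctan √2 / √2`.
-/

open MeasureTheory ProbabilityTheory Real Set Filter Topology

lemma integrable_exp_neg_sq_div_two : Integrable fun y : ℝ ↦ exp (-y ^ 2 / 2) := by
  simpa [neg_div, div_eq_inv_mul] using integrable_exp_neg_mul_sq (b := 1 / 2) (by norm_num)

lemma integral_exp_neg_sq_div_two : ∫ y, exp (-y ^ 2 / 2) = √(2 * π) := by
  have := integral_gaussian (1 / 2)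
  rw [show π / (1 / 2) = 2 * π by ring] at this
  rw [← this]
  congr 1 with y
  ring_nf

lemma hasDerivAt_exp_neg_sq_div_two (t : ℝ) :
    HasDerivAt (fun t : ℝ ↦ exp (-t ^ 2 / 2)) (-t * exp (-t ^ 2 / 2)) t :=
  ((hasDerivAt_pow 2 t).neg.div_const 2).exp.congr_deriv <| by
    simp only [Pi.neg_apply]; push_cast; ring

lemma exp_neg_sq_div_two_le_one (t : ℝ) : exp (-t ^ 2 / 2) ≤ 1 :=
  exp_le_one_iff.2 (by nlinarith [sq_nonneg t])

lemma mul_exp_neg_sq_div_two_le_one (t : ℝ) : t * exp (-t ^ 2 / 2) ≤ 1 := by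
  calc t * exp (-t ^ 2 / 2) ≤ exp (t ^ 2 / 2) * exp (-t ^ 2 / 2) := by
        gcongr
        nlinarith [add_one_le_exp (t ^ 2 / 2), sq_nonneg (t - 1)]
    _ = 1 := by rw [← exp_add]; ring_nf; exact exp_zero

lemma tendsto_exp_neg_sq_div_two : Tendsto (fun t : ℝ ↦ exp (-t ^ 2 / 2)) atTop (𝓝 0) := by
  refine tendsto_exp_atBot.comp ?_
  simpa [neg_div] using (tendsto_pow_atTop two_ne_zero).atTop_div_const (r := 2) two_pos

lemma integrableOn_Ioi_of_abs_le_mul_exp {f : ℝ → ℝ} {c : ℝ} (hfc : Continuous f)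
    (hf : ∀ t ≥ 0, |f t| ≤ c * exp (-t ^ 2 / 2)) : IntegrableOn f (Ioi 0) :=
  Integrable.mono' (integrable_exp_neg_sq_div_two.const_mul c).integrableOn
    hfc.aestronglyMeasurable <| (ae_restrict_mem measurableSet_Ioi).mono fun t ht ↦ hf t ht.le

lemma tendsto_zero_of_abs_le_mul_exp {f : ℝ → ℝ} {c : ℝ}
    (hf : ∀ t ≥ 0, |f t| ≤ c * exp (-t ^ 2 / 2)) : Tendsto f atTop (𝓝 0) := by
  refine squeeze_zero_norm' ?_ (by simpa using tendsto_exp_neg_sq_div_two.const_mul c)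
  filter_upwards [eventually_ge_atTop 0] with t ht using hf t ht

lemma integral_Ioi_mul_exp_neg_mul_sq {b : ℝ} (hb : 0 < b) :
    ∫ r in Ioi 0, r * exp (-b * r ^ 2) = (2 * b)⁻¹ := by
  exact_mod_cast integral_mul_cexp_neg_mul_sq (b := b) (by simpa using hb)

lemma integral_Ioi_one_inv_two_add_sq : ∫ s in Ioi 1, (2 + s ^ 2)⁻¹ = arctan √2 / √2 := by
  have hs : (0 : ℝ) < √2 := by positivity
  rw [integral_Ioi_of_hasDerivAt_of_nonneg' (g := fun s ↦ arctan (s / √2) / √2)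
    (l := π / 2 / √2) (fun s _ ↦ ?_) (fun s _ ↦ by positivity)
    ((tendsto_arctan_atTop.mono_right nhdsWithin_le_nhds).comp
      (tendsto_id.atTop_div_const hs) |>.div_const _)]
  · rw [← sub_div, one_div, arctan_inv_of_pos hs]
    ring
  · refine (((hasDerivAt_id s).div_const √2).arctan.div_const √2).congr_deriv ?_
    field_simp
    simp [sq_sqrt zero_le_two]

noncomputable def gaussTail (t : ℝ) : ℝ := ∫ y in Ioi t, exp (-y ^ 2 / 2)

lemma gaussTail_nonneg (t : ℝ) : 0 ≤ gaussTail t :=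
  setIntegral_nonneg measurableSet_Ioi fun _ _ ↦ (exp_pos _).le

lemma gaussTail_zero : gaussTail 0 = √(2 * π) / 2 := by
  have := integral_gaussian_Ioi (1 / 2)
  rw [show π / (1 / 2) = 2 * π by ring] at this
  rw [← this, gaussTail]
  congr 1 with y
  ring_nf

lemma gaussTail_sub_gaussTail (a b : ℝ) :
    gaussTail a - gaussTail b = ∫ y in a..b, exp (-y ^ 2 / 2) :=
  intervalIntegral.integral_Ioi_sub_Ioi' integrable_exp_neg_sq_div_two.integrableOn
    integrable_exp_neg_sq_div_two.integrableOn

lemma hasDerivAt_gaussTail (t : ℝ) : HasDerivAt gaussTail (-exp (-t ^ 2 / 2)) t := by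
  have h : gaussTail = fun u ↦ gaussTail 0 - ∫ y in (0 : ℝ)..u, exp (-y ^ 2 / 2) := by
    ext u; rw [← gaussTail_sub_gaussTail]; ring
  rw [h]
  exact (intervalIntegral.integral_hasDerivAt_right
    integrable_exp_neg_sq_div_two.intervalIntegrable
    integrable_exp_neg_sq_div_two.aestronglyMeasurable.stronglyMeasurableAtFilter
    (by fun_prop)).const_sub _

@[fun_prop]
lemma continuous_gaussTail : Continuous gaussTail :=
  continuous_iff_continuousAt.2 fun t ↦ (hasDerivAt_gaussTail t).continuousAt

lemma gaussTail_le {t : ℝ} (ht : 0 ≤ t) : gaussTail t ≤ √(2 * π) * exp (-t ^ 2 / 2) := by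
  have hshift : Integrable fun y : ℝ ↦ exp (-t ^ 2 / 2) * exp (-(y - t) ^ 2 / 2) :=
    (integrable_exp_neg_sq_div_two.comp_sub_right t).const_mul _
  calc gaussTail t ≤ ∫ y in Ioi t, exp (-t ^ 2 / 2) * exp (-(y - t) ^ 2 / 2) := by
        refine setIntegral_mono_on integrable_exp_neg_sq_div_two.integrableOn
          hshift.integrableOn measurableSet_Ioi fun y hy ↦ ?_
        rw [← exp_add, exp_le_exp]
        -- `t ^ 2 + (y - t) ^ 2 ≤ y ^ 2` as soon as `0 ≤ t ≤ y`
        nlinarith [mem_Ioi.1 hy]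
    _ ≤ ∫ y, exp (-t ^ 2 / 2) * exp (-(y - t) ^ 2 / 2) :=
        setIntegral_le_integral hshift (ae_of_all _ fun y ↦ by positivity)
    _ = √(2 * π) * exp (-t ^ 2 / 2) := by
        rw [integral_const_mul, integral_sub_right_eq_self (fun y ↦ exp (-y ^ 2 / 2)),
          integral_exp_neg_sq_div_two, mul_comm]

lemma abs_gaussTail_cube_le {t : ℝ} (ht : 0 ≤ t) :
    |gaussTail t ^ 3| ≤ √(2 * π) ^ 3 * exp (-t ^ 2 / 2) := by
  have hE0 := exp_pos (-t ^ 2 / 2)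
  rw [abs_of_nonneg (pow_nonneg (gaussTail_nonneg t) 3)]
  calc gaussTail t ^ 3 ≤ (√(2 * π) * exp (-t ^ 2 / 2)) ^ 3 := by
        gcongr; exacts [gaussTail_nonneg t, gaussTail_le ht]
    _ = √(2 * π) ^ 3 * exp (-t ^ 2 / 2) ^ 3 := by ring
    _ ≤ √(2 * π) ^ 3 * exp (-t ^ 2 / 2) := by
        gcongr; exact pow_le_of_le_one hE0.le (exp_neg_sq_div_two_le_one t) (by norm_num)

lemma abs_exp_sq_mul_gaussTail_le {t : ℝ} (ht : 0 ≤ t) :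
    |exp (-t ^ 2 / 2) ^ 2 * gaussTail t| ≤ √(2 * π) * exp (-t ^ 2 / 2) := by
  have hE0 := exp_pos (-t ^ 2 / 2)
  rw [abs_of_nonneg (mul_nonneg (by positivity) (gaussTail_nonneg t))]
  calc exp (-t ^ 2 / 2) ^ 2 * gaussTail t
      ≤ exp (-t ^ 2 / 2) ^ 2 * (√(2 * π) * exp (-t ^ 2 / 2)) := by
        gcongr; exact gaussTail_le ht
    _ = √(2 * π) * exp (-t ^ 2 / 2) ^ 3 := by ring
    _ ≤ √(2 * π) * exp (-t ^ 2 / 2) := by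
        gcongr; exact pow_le_of_le_one hE0.le (exp_neg_sq_div_two_le_one t) (by norm_num)

lemma integrableOn_gaussTail_cube : IntegrableOn (fun t ↦ gaussTail t ^ 3) (Ioi 0) :=
  integrableOn_Ioi_of_abs_le_mul_exp (by fun_prop) fun _ ht ↦ abs_gaussTail_cube_le ht

lemma integrableOn_exp_sq_mul_gaussTail :
    IntegrableOn (fun t ↦ exp (-t ^ 2 / 2) ^ 2 * gaussTail t) (Ioi 0) :=
  integrableOn_Ioi_of_abs_le_mul_exp (by fun_prop) fun _ ht ↦ abs_exp_sq_mul_gaussTail_le ht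

lemma gaussTail_eq_mul_integral_Ioi_one {t : ℝ} (ht : 0 < t) :
    gaussTail t = t * ∫ s in Ioi 1, exp (-(t * s) ^ 2 / 2) := by
  rw [integral_comp_mul_left_Ioi (fun y ↦ exp (-y ^ 2 / 2)) 1 ht, mul_one, smul_eq_mul,
    mul_inv_cancel_left₀ ht.ne', gaussTail]

lemma exp_sq_mul_gaussTail_eq_integral {t : ℝ} (ht : 0 < t) :
    exp (-t ^ 2 / 2) ^ 2 * gaussTail t = ∫ s in Ioi 1, t * exp (-(1 + s ^ 2 / 2) * t ^ 2) := by
  rw [gaussTail_eq_mul_integral_Ioi_one ht, ← mul_assoc, ← integral_const_mul]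
  congr 1 with s
  rw [mul_comm _ t, mul_assoc, ← exp_nat_mul, ← exp_add]
  ring_nf

lemma integrable_mul_exp_neg_one_add_sq_mul_sq :
    Integrable (Function.uncurry fun t s : ℝ ↦ t * exp (-(1 + s ^ 2 / 2) * t ^ 2))
      ((volume.restrict (Ioi 0)).prod (volume.restrict (Ioi 1))) := by
  refine (integrable_prod_iff (by fun_prop : Continuous _).aestronglyMeasurable).2 ⟨?_, ?_⟩
  · filter_upwards [ae_restrict_mem measurableSet_Ioi] with t ht
    have h : (fun s ↦ t * exp (-(1 + s ^ 2 / 2) * t ^ 2))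
        = fun s ↦ t * exp (-t ^ 2) * exp (-(t ^ 2 / 2) * s ^ 2) := by
      ext s; rw [mul_assoc, ← exp_add]; ring_nf
    simp only [Function.uncurry_apply_pair, h]
    exact ((integrable_exp_neg_mul_sq (by positivity [mem_Ioi.1 ht])).const_mul _).integrableOn
  · refine integrableOn_exp_sq_mul_gaussTail.congr ?_
    filter_upwards [ae_restrict_mem measurableSet_Ioi] with t ht
    rw [exp_sq_mul_gaussTail_eq_integral ht]
    refine setIntegral_congr_fun measurableSet_Ioi fun s _ ↦ ?_
    simp only [Function.uncurry_apply_pair, norm_eq_abs]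
    rw [abs_of_nonneg (mul_nonneg (le_of_lt ht) (exp_pos _).le)]

lemma integral_exp_sq_mul_gaussTail :
    ∫ t in Ioi 0, exp (-t ^ 2 / 2) ^ 2 * gaussTail t = arctan √2 / √2 := by
  rw [setIntegral_congr_fun measurableSet_Ioi fun t ht ↦ exp_sq_mul_gaussTail_eq_integral ht,
    integral_integral_swap integrable_mul_exp_neg_one_add_sq_mul_sq,
    ← integral_Ioi_one_inv_two_add_sq]
  refine setIntegral_congr_fun measurableSet_Ioi fun s _ ↦ ?_
  rw [integral_Ioi_mul_exp_neg_mul_sq (by positivity)]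
  ring

lemma hasDerivAt_mul_gaussTail_cube_sub (t : ℝ) :
    HasDerivAt (fun t ↦ t * gaussTail t ^ 3 - 3 * (exp (-t ^ 2 / 2) * gaussTail t ^ 2))
      (gaussTail t ^ 3 + 6 * (exp (-t ^ 2 / 2) ^ 2 * gaussTail t)) t :=
  ((hasDerivAt_id t).mul ((hasDerivAt_gaussTail t).pow 3)).sub
    (((hasDerivAt_exp_neg_sq_div_two t).mul ((hasDerivAt_gaussTail t).pow 2)).const_mul 3)
    |>.congr_deriv (by simp only [id, Pi.pow_apply]; push_cast; ring)

lemma abs_mul_gaussTail_cube_sub_le {t : ℝ} (ht : 0 ≤ t) :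
    |t * gaussTail t ^ 3 - 3 * (exp (-t ^ 2 / 2) * gaussTail t ^ 2)|
      ≤ (√(2 * π) ^ 3 + 3 * √(2 * π) ^ 2) * exp (-t ^ 2 / 2) := by
  have hQ0 := gaussTail_nonneg t
  have hQ := gaussTail_le ht
  have hE0 := exp_pos (-t ^ 2 / 2)
  have hE1 := exp_neg_sq_div_two_le_one t
  have htE := mul_exp_neg_sq_div_two_le_one t
  have hK : 0 < √(2 * π) := by positivity
  have hE2 : exp (-t ^ 2 / 2) ^ 2 ≤ exp (-t ^ 2 / 2) := pow_le_of_le_one hE0.le hE1 (by norm_num)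
  have hE3 : exp (-t ^ 2 / 2) ^ 3 ≤ exp (-t ^ 2 / 2) := pow_le_of_le_one hE0.le hE1 (by norm_num)
  calc |t * gaussTail t ^ 3 - 3 * (exp (-t ^ 2 / 2) * gaussTail t ^ 2)|
      ≤ t * gaussTail t ^ 3 + 3 * (exp (-t ^ 2 / 2) * gaussTail t ^ 2) := by
        rw [abs_le]; constructor <;> nlinarith [pow_nonneg hQ0 3, pow_nonneg hQ0 2]
    _ ≤ t * (√(2 * π) * exp (-t ^ 2 / 2)) ^ 3
        + 3 * (exp (-t ^ 2 / 2) * (√(2 * π) * exp (-t ^ 2 / 2)) ^ 2) := by gcongr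
    _ = √(2 * π) ^ 3 * (t * exp (-t ^ 2 / 2)) * exp (-t ^ 2 / 2) ^ 2
        + 3 * √(2 * π) ^ 2 * exp (-t ^ 2 / 2) ^ 3 := by ring
    _ ≤ √(2 * π) ^ 3 * 1 * exp (-t ^ 2 / 2) + 3 * √(2 * π) ^ 2 * exp (-t ^ 2 / 2) := by
        gcongr
    _ = (√(2 * π) ^ 3 + 3 * √(2 * π) ^ 2) * exp (-t ^ 2 / 2) := by ring

lemma integral_gaussTail_cube_add :
    ∫ t in Ioi 0, (gaussTail t ^ 3 + 6 * (exp (-t ^ 2 / 2) ^ 2 * gaussTail t))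
      = 3 * (π / 2) := by
  have hQ0 : gaussTail 0 ^ 2 = π / 2 := by
    rw [gaussTail_zero, div_pow, sq_sqrt (by positivity)]; ring
  rw [integral_Ioi_of_hasDerivAt_of_tendsto' (fun t _ ↦ hasDerivAt_mul_gaussTail_cube_sub t)
    (integrableOn_gaussTail_cube.add (integrableOn_exp_sq_mul_gaussTail.const_mul 6))
    (tendsto_zero_of_abs_le_mul_exp fun t ht ↦ abs_mul_gaussTail_cube_sub_le ht),
    hQ0]
  norm_num

lemma integral_gaussTail_cube :
    ∫ t in Ioi 0, gaussTail t ^ 3 = 3 * (π / 2) - 6 * (arctan √2 / √2) := by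
  have h := integral_gaussTail_cube_add
  rw [integral_add integrableOn_gaussTail_cube (integrableOn_exp_sq_mul_gaussTail.const_mul 6),
    integral_const_mul, integral_exp_sq_mul_gaussTail] at h
  linarith

lemma gaussianReal_real_Ioi (t : ℝ) :
    (gaussianReal 0 1).real (Ioi t) = gaussTail t / √(2 * π) := by
  rw [measureReal_def, gaussianReal_apply_eq_integral 0 one_ne_zero, ENNReal.toReal_ofReal
      (setIntegral_nonneg measurableSet_Ioi fun x _ ↦ gaussianPDFReal_nonneg _ _ _),
    gaussTail, div_eq_inv_mul, ← integral_const_mul]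
  simp [gaussianPDFReal]

lemma gaussianReal_real_abs_gt {t : ℝ} (ht : 0 ≤ t) :
    (gaussianReal 0 1).real {x | t < |x|} = 2 / √(2 * π) * gaussTail t := by
  have hsplit : {x : ℝ | t < |x|} = Iio (-t) ∪ Ioi t := by
    ext x; simp only [mem_ofPred_eq, mem_union, mem_Iio, mem_Ioi, lt_abs, lt_neg, or_comm]
  have hsymm : (gaussianReal 0 1).real (Iio (-t)) = (gaussianReal 0 1).real (Ioi t) := by
    have h := gaussianReal_map_neg (μ := 0) (v := 1)
    rw [neg_zero] at h
    rw [← h, map_measureReal_apply measurable_neg measurableSet_Iio, h, Set.neg_preimage,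
      Set.neg_Iio, neg_neg]
  have hdisj : Disjoint (Iio (-t)) (Ioi t) :=
    (Iic_disjoint_Ioi (by linarith : -t ≤ t)).mono_left Iio_subset_Iic_self
  rw [hsplit, measureReal_union hdisj measurableSet_Ioi, hsymm, gaussianReal_real_Ioi]
  ring

lemma ProbabilityTheory.iIndepFun.measureReal_iInter_preimage_eq_pow {Ω β ι : Type*}
    [MeasurableSpace Ω] [MeasurableSpace β] [Fintype ι] {P : Measure Ω} {μ : Measure β}
    {Y : ι → Ω → β}
    (hY : iIndepFun Y P) (hm : ∀ i, Measurable (Y i)) (hμ : ∀ i, P.map (Y i) = μ)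
    {A : Set β} (hA : MeasurableSet A) :
    P.real (⋂ i, Y i ⁻¹' A) = μ.real A ^ Fintype.card ι := by
  rw [measureReal_def, hY.meas_iInter fun i ↦ ⟨A, hA, rfl⟩]
  simp_rw [← Measure.map_apply (hm _) hA, hμ]
  rw [Finset.prod_const, Finset.card_univ, ENNReal.toReal_pow, measureReal_def]

theorem stmt_1_general {Ω : Type*} [MeasurableSpace Ω] (P : Measure Ω)
    (Y₁ Y₂ Y₃ : Ω → ℝ) (hm₁ : Measurable Y₁) (hm₂ : Measurable Y₂) (hm₃ : Measurable Y₃)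
    (h₁ : Measure.map Y₁ P = gaussianReal 0 1)
    (h₂ : Measure.map Y₂ P = gaussianReal 0 1)
    (h₃ : Measure.map Y₃ P = gaussianReal 0 1)
    (hindep : iIndepFun ![Y₁, Y₂, Y₃] P) :
    ∫ ω, min (|Y₁ ω|) (min (|Y₂ ω|) (|Y₃ ω|)) ∂P
      = (12 / Real.pi ^ ((3:ℝ)/2)) * (Real.sqrt 2 * Real.pi / 4 - Real.arctan (Real.sqrt 2)) := by
  have hY₁ : Integrable Y₁ P :=
    (integrable_map_measure aestronglyMeasurable_id hm₁.aemeasurable).1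
      (h₁ ▸ (memLp_id_gaussianReal 1).integrable le_rfl)
  have hmin : Integrable (fun ω ↦ min (|Y₁ ω|) (min (|Y₂ ω|) (|Y₃ ω|))) P :=
    hY₁.abs.mono (by fun_prop) (ae_of_all _ fun ω ↦ by
      simp only [norm_eq_abs, abs_abs]
      exact (abs_of_nonneg (by positivity)).trans_le (min_le_left _ _))
  have htail : ∀ t ∈ Ioi (0 : ℝ), P.real {ω | t < min (|Y₁ ω|) (min (|Y₂ ω|) (|Y₃ ω|))}
      = (2 / √(2 * π)) ^ 3 * gaussTail t ^ 3 := by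
    intro t ht
    have hset : {ω | t < min (|Y₁ ω|) (min (|Y₂ ω|) (|Y₃ ω|))}
        = ⋂ i, ![Y₁, Y₂, Y₃] i ⁻¹' {x | t < |x|} := by
      ext ω; simp [Fin.forall_fin_succ]
    rw [hset, hindep.measureReal_iInter_preimage_eq_pow (fun i ↦ by fin_cases i <;> assumption)
      (fun i ↦ by fin_cases i <;> assumption)
      (measurableSet_lt measurable_const continuous_abs.measurable),
      gaussianReal_real_abs_gt ht.le, Fintype.card_fin, mul_pow]
  rw [hmin.integral_eq_integral_meas_lt (ae_of_all _ fun ω ↦ by positivity),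
    setIntegral_congr_fun measurableSet_Ioi htail, integral_const_mul, integral_gaussTail_cube]
  have hpi : π ^ ((3 : ℝ) / 2) = π * √π := by
    rw [sqrt_eq_rpow, ← rpow_one_add' pi_pos.le (by norm_num)]; norm_num
  rw [hpi, sqrt_mul zero_le_two]
  field_simp
  rw [show √2 ^ 4 = (√2 ^ 2) ^ 2 by ring, sq_sqrt zero_le_two, sq_sqrt pi_pos.le]
  ring

theorem stmt_1 {Ω : Type*} [MeasurableSpace Ω] (P : Measure Ω) [IsProbabilityMeasure P]
    (Y₁ Y₂ Y₃ : Ω → ℝ) (hm₁ : Measurable Y₁) (hm₂ : Measurable Y₂) (hm₃ : Measurable Y₃)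
    (h₁ : Measure.map Y₁ P = gaussianReal 0 1)
    (h₂ : Measure.map Y₂ P = gaussianReal 0 1)
    (h₃ : Measure.map Y₃ P = gaussianReal 0 1)
    (hindep : iIndepFun ![Y₁, Y₂, Y₃] P) :
    ∫ ω, min (|Y₁ ω|) (min (|Y₂ ω|) (|Y₃ ω|)) ∂P
      = (12 / Real.pi ^ ((3:ℝ)/2)) * (Real.sqrt 2 * Real.pi / 4 - Real.arctan (Real.sqrt 2)) :=
  stmt_1_general P Y₁ Y₂ Y₃ hm₁ hm₂ hm₃ h₁ h₂ h₃ hindep
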